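/- arXiv:1412.5110 — 3 statements merged into one kernel-verified Lean document; each statement's English description precedes it below -/
import Mathlib

section
/- If Γ is a K-quasiarc and δ ∈ (0,1), then there exists M₁ > 1 depending only on K such that for any two δ-partitions P, P' of Γ, the ratio M(Γ,P)/M(Γ,P') is at most M₁. -/
/-!
The index of a `δ`-partition `P` is comparable to `δ · |P|`, since every subarc has diameter
between `δ D / 2` and `δ D`, where `D = diam Γ`. So it suffices to compare the cardinalities of two
`δ`-partitions `P` and `P'`. Assign to each initial point of an arc of `P` the arc of `P'` containing
it. The points assigned to one arc of `P'` lie in a ball of radius `δ D`, and by the two-point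
condition any two of them are `δ D / (2K)` apart, because the subarc between them contains a whole
arc of `P`. A volume count then bounds their number by `(4K + 1) ^ d` in dimension `d`.
-/

open Metric Set MeasureTheory Module

theorem card_mul_pow_le_of_separated {E ι : Type*} [NormedAddCommGroup E] [NormedSpace ℝ E]
    [FiniteDimensional ℝ E] (F : Finset ι) (p : ι → E) {c : E} {R ε : ℝ} (hR : 0 ≤ R)
    (hε : 0 < ε) (hp : ∀ i ∈ F, p i ∈ closedBall c R)
    (hsep : ∀ i ∈ F, ∀ j ∈ F, i ≠ j → ε ≤ dist (p i) (p j)) :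
    (F.card : ℝ) * (ε / 2) ^ finrank ℝ E ≤ (R + ε / 2) ^ finrank ℝ E := by
  borelize E
  set μ : Measure E := Measure.addHaar
  have hdisj : (F : Set ι).PairwiseDisjoint fun i => ball (p i) (ε / 2) := fun i hi j hj hij =>
    ball_disjoint_ball (by linarith [hsep i hi j hj hij])
  have hsub : ⋃ i ∈ F, ball (p i) (ε / 2) ⊆ ball c (R + ε / 2) :=
    iUnion₂_subset fun i hi => ball_subset_ball' (by linarith [mem_closedBall.1 (hp i hi)])
  have hvol : (F.card : ENNReal) * ENNReal.ofReal ((ε / 2) ^ finrank ℝ E) * μ (ball 0 1) ≤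
      ENNReal.ofReal ((R + ε / 2) ^ finrank ℝ E) * μ (ball 0 1) :=
    calc _ = μ (⋃ i ∈ F, ball (p i) (ε / 2)) := by
          rw [measure_biUnion_finset hdisj fun _ _ => measurableSet_ball]
          simp only [μ.addHaar_ball_of_pos _ (half_pos hε), Finset.sum_const, nsmul_eq_mul,
            mul_assoc]
      _ ≤ μ (ball c (R + ε / 2)) := measure_mono hsub
      _ = _ := μ.addHaar_ball_of_pos _ (by positivity)
  have hcount := (ENNReal.mul_le_mul_iff_left (measure_ball_pos μ 0 one_pos).ne'
    measure_ball_lt_top.ne).1 hvol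
  rw [← ENNReal.ofReal_natCast, ← ENNReal.ofReal_mul (by positivity)] at hcount
  exact (ENNReal.ofReal_le_ofReal_iff (by positivity)).1 hcount

theorem exists_lt_mem_Ico_of_le_of_lt {α : Type*} [LinearOrder α] (u : ℕ → α) {n : ℕ} {x : α}
    (h0 : u 0 ≤ x) (hn : x < u n) : ∃ j < n, x ∈ Ico (u j) (u (j + 1)) := by
  induction n with
  | zero => exact absurd h0 (not_le.2 hn)
  | succ n ih =>
    by_cases h : u n ≤ x
    · exact ⟨n, n.lt_succ_self, h, hn⟩
    · obtain ⟨j, hj, hx⟩ := ih (not_le.1 h)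
      exact ⟨j, hj.trans n.lt_succ_self, hx⟩

section Quasiarc

variable {X : Type*} [MetricSpace X] {γ : ℝ → X} {K : ℝ}

def TwoPointCondition (γ : ℝ → X) (K : ℝ) : Prop :=
  ∀ a ∈ Icc (0 : ℝ) 1, ∀ b ∈ Icc (0 : ℝ) 1, a ≤ b → diam (γ '' Icc a b) ≤ K * dist (γ a) (γ b)

theorem isBounded_image_Icc (hγ : ContinuousOn γ (Icc 0 1)) {a b : ℝ} (ha : 0 ≤ a)
    (hb : b ≤ 1) : Bornology.IsBounded (γ '' Icc a b) :=
  (isCompact_Icc.image_of_continuousOn (hγ.mono (Icc_subset_Icc ha hb))).isBounded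

theorem diam_image_Icc_pos (hγ : ContinuousOn γ (Icc 0 1)) (hinj : InjOn γ (Icc 0 1)) :
    0 < diam (γ '' Icc 0 1) := by
  have h0 : (0 : ℝ) ∈ Icc 0 1 := left_mem_Icc.2 zero_le_one
  have h1 : (1 : ℝ) ∈ Icc 0 1 := right_mem_Icc.2 zero_le_one
  exact (dist_pos.2 (hinj.ne h0 h1 zero_ne_one)).trans_le
    (dist_le_diam_of_mem (isBounded_image_Icc hγ le_rfl le_rfl) (mem_image_of_mem γ h0)
      (mem_image_of_mem γ h1))

theorem TwoPointCondition.diam_image_Icc_le_mul_dist (h2pt : TwoPointCondition γ K)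
    (hγ : ContinuousOn γ (Icc 0 1)) {a b c : ℝ} (ha : 0 ≤ a) (hab : a ≤ b) (hbc : b ≤ c)
    (hc : c ≤ 1) : diam (γ '' Icc a b) ≤ K * dist (γ a) (γ c) :=
  (diam_mono (image_mono (Icc_subset_Icc_right hbc)) (isBounded_image_Icc hγ ha hc)).trans
    (h2pt a ⟨ha, hab.trans (hbc.trans hc)⟩ c ⟨ha.trans (hab.trans hbc), hc⟩ (hab.trans hbc))

structure IsDeltaPartition (γ : ℝ → X) (δ : ℝ) (N : ℕ) (t : ℕ → ℝ) : Prop where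
  zero : t 0 = 0
  last : t N = 1
  lt_succ : ∀ i < N, t i < t (i + 1)
  diam_bounds : ∀ i < N,
    δ / 2 * diam (γ '' Icc 0 1) ≤ diam (γ '' Icc (t i) (t (i + 1))) ∧
      diam (γ '' Icc (t i) (t (i + 1))) ≤ δ * diam (γ '' Icc 0 1)

/-- The index `M(Γ, P)` of the partition `0 = t 0 < ⋯ < t N = 1`. -/
noncomputable def partitionIndex (γ : ℝ → X) (N : ℕ) (t : ℕ → ℝ) : ℝ :=
  (∑ i ∈ Finset.range N, diam (γ '' Icc (t i) (t (i + 1)))) / diam (γ '' Icc 0 1)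

namespace IsDeltaPartition

variable {δ : ℝ} {N : ℕ} {t : ℕ → ℝ} (hP : IsDeltaPartition γ δ N t)
include hP

theorem strictMonoOn : StrictMonoOn t (Iic N) :=
  strictMonoOn_Iic_of_lt_succ fun m hm => by simpa using hP.lt_succ m hm

theorem mem_Icc {i : ℕ} (hi : i ≤ N) : t i ∈ Icc 0 1 := by
  refine ⟨hP.zero ▸ ?_, hP.last ▸ ?_⟩ <;>
    exact hP.strictMonoOn.monotoneOn (mem_Iic.2 (by omega)) (mem_Iic.2 (by omega)) (by omega)

theorem mem_Ico {i : ℕ} (hi : i < N) : t i ∈ Ico 0 1 :=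
  ⟨(hP.mem_Icc hi.le).1, hP.last ▸ hP.strictMonoOn hi.le self_mem_Iic hi⟩

theorem exists_mem_Ico {x : ℝ} (hx : x ∈ Ico 0 1) : ∃ j < N, x ∈ Ico (t j) (t (j + 1)) :=
  exists_lt_mem_Ico_of_le_of_lt t (hP.zero ▸ hx.1) (hP.last ▸ hx.2)

theorem partitionIndex_le (hD : 0 < diam (γ '' Icc 0 1)) : partitionIndex γ N t ≤ N * δ := by
  rw [partitionIndex, div_le_iff₀ hD]
  calc _ ≤ ∑ _i ∈ Finset.range N, δ * diam (γ '' Icc 0 1) :=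
        Finset.sum_le_sum fun i hi => (hP.diam_bounds i (Finset.mem_range.1 hi)).2
    _ = _ := by simp [mul_assoc]

theorem mul_div_two_le_partitionIndex (hD : 0 < diam (γ '' Icc 0 1)) :
    N * δ / 2 ≤ partitionIndex γ N t := by
  rw [partitionIndex, le_div_iff₀ hD]
  calc _ = ∑ _i ∈ Finset.range N, δ / 2 * diam (γ '' Icc 0 1) := by simp; ring
    _ ≤ _ := Finset.sum_le_sum fun i hi => (hP.diam_bounds i (Finset.mem_range.1 hi)).1

theorem div_le_dist (hγ : ContinuousOn γ (Icc 0 1)) (h2pt : TwoPointCondition γ K) (hK : 0 < K)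
    {i j : ℕ} (hi : i ≤ N) (hj : j ≤ N) (hij : i ≠ j) :
    δ * diam (γ '' Icc 0 1) / (2 * K) ≤ dist (γ (t i)) (γ (t j)) := by
  wlog hlt : i < j generalizing i j
  · rw [dist_comm]
    exact this hj hi hij.symm (lt_of_le_of_ne (not_lt.1 hlt) hij.symm)
  have hsucc : t (i + 1) ≤ t j := hP.strictMonoOn.monotoneOn (mem_Iic.2 (by omega)) hj hlt
  have := h2pt.diam_image_Icc_le_mul_dist hγ (hP.mem_Icc hi).1 (hP.lt_succ i (by omega)).le
    hsucc (hP.mem_Icc hj).2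
  rw [div_le_iff₀ (by positivity)]
  linarith [(hP.diam_bounds i (by omega)).1]

end IsDeltaPartition

end Quasiarc

section FiniteDimensional

variable {E : Type*} [NormedAddCommGroup E] [NormedSpace ℝ E] [FiniteDimensional ℝ E]
  {γ : ℝ → E} {K δ : ℝ} {N N' : ℕ} {t t' : ℕ → ℝ}

namespace IsDeltaPartition

variable (hP : IsDeltaPartition γ δ N t) (hP' : IsDeltaPartition γ δ N' t')
  (hγ : ContinuousOn γ (Icc 0 1)) (hinj : InjOn γ (Icc 0 1)) (h2pt : TwoPointCondition γ K)
  (hK : 0 < K) (hδ : 0 < δ)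
include hP hP' hγ hinj h2pt hK hδ

theorem card_filter_mem_Ico_le {j : ℕ} (hj : j < N') :
    (((Finset.range N).filter fun i => t i ∈ Ico (t' j) (t' (j + 1))).card : ℝ) ≤
      (4 * K + 1) ^ finrank ℝ E := by
  have hD := diam_image_Icc_pos hγ hinj
  set ε := δ * diam (γ '' Icc 0 1) / (2 * K)
  have hε : 0 < ε := by positivity
  have hpack := card_mul_pow_le_of_separated
    ((Finset.range N).filter fun i => t i ∈ Ico (t' j) (t' (j + 1))) (γ ∘ t) (c := γ (t' j)) (R := δ * diam (γ '' Icc 0 1)) (by positivity) hε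
    (fun i hi => by
      rw [Finset.mem_filter] at hi
      exact mem_closedBall.2 <| (dist_le_diam_of_mem
        (isBounded_image_Icc hγ (hP'.mem_Icc hj.le).1 (hP'.mem_Icc hj).2)
        (mem_image_of_mem γ (Ico_subset_Icc_self hi.2))
        (mem_image_of_mem γ (left_mem_Icc.2 (hP'.lt_succ j hj).le))).trans
          (hP'.diam_bounds j hj).2)
    (fun i hi i' hi' hne => hP.div_le_dist hγ h2pt hK
      (Finset.mem_range.1 (Finset.mem_filter.1 hi).1).le
      (Finset.mem_range.1 (Finset.mem_filter.1 hi').1).le hne)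
  have hradius : δ * diam (γ '' Icc 0 1) + ε / 2 = (4 * K + 1) * (ε / 2) := by
    simp only [ε]; field_simp; ring
  rw [hradius, mul_pow] at hpack
  exact le_of_mul_le_mul_right hpack (by positivity)

theorem card_le_mul_card : (N : ℝ) ≤ (4 * K + 1) ^ finrank ℝ E * N' := by
  classical
  set fiber := fun j => (Finset.range N).filter fun i => t i ∈ Ico (t' j) (t' (j + 1))
  have hcover : Finset.range N ⊆ (Finset.range N').biUnion fiber := fun i hi => by
    obtain ⟨j, hj, hmem⟩ := hP'.exists_mem_Ico (hP.mem_Ico (Finset.mem_range.1 hi))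
    exact Finset.mem_biUnion.2 ⟨j, Finset.mem_range.2 hj, Finset.mem_filter.2 ⟨hi, hmem⟩⟩
  calc (N : ℝ) = (Finset.range N).card := by simp
    _ ≤ ((Finset.range N').biUnion fiber).card := by exact_mod_cast Finset.card_le_card hcover
    _ ≤ ∑ j ∈ Finset.range N', ((fiber j).card : ℝ) := by exact_mod_cast Finset.card_biUnion_le
    _ ≤ ∑ _j ∈ Finset.range N', (4 * K + 1) ^ finrank ℝ E := Finset.sum_le_sum fun j hj =>
      hP.card_filter_mem_Ico_le hP' hγ hinj h2pt hK hδ (Finset.mem_range.1 hj)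
    _ = _ := by simp [mul_comm]

end IsDeltaPartition

end FiniteDimensional

/-- If `Γ` is a `K`-quasiarc and `δ ∈ (0,1)`, then there is `M₁ > 1`
depending only on `K` such that for any two `δ`-partitions `P, P'` of `Γ`,
`M(Γ,P)/M(Γ,P') ≤ M₁`. -/
theorem delta_partitions_comparable_index :
    ∀ K : ℝ, 1 < K → ∃ M₁ : ℝ, 1 < M₁ ∧
      ∀ γ : ℝ → EuclideanSpace ℝ (Fin 2),
        ContinuousOn γ (Set.Icc 0 1) →
        Set.InjOn γ (Set.Icc 0 1) →
        (∀ a ∈ Set.Icc (0 : ℝ) 1, ∀ b ∈ Set.Icc (0 : ℝ) 1, a ≤ b →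
          diam (γ '' Set.Icc a b) ≤ K * dist (γ a) (γ b)) →
        ∀ δ : ℝ, δ ∈ Set.Ioo (0 : ℝ) 1 →
        ∀ (N : ℕ) (t : ℕ → ℝ), 0 < N → t 0 = 0 → t N = 1 →
          (∀ i < N, t i < t (i + 1)) →
          (∀ i < N,
            δ / 2 * diam (γ '' Set.Icc 0 1) ≤ diam (γ '' Set.Icc (t i) (t (i + 1))) ∧
            diam (γ '' Set.Icc (t i) (t (i + 1))) ≤ δ * diam (γ '' Set.Icc 0 1)) →
        ∀ (N' : ℕ) (t' : ℕ → ℝ), 0 < N' → t' 0 = 0 → t' N' = 1 →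
          (∀ i < N', t' i < t' (i + 1)) →
          (∀ i < N',
            δ / 2 * diam (γ '' Set.Icc 0 1) ≤ diam (γ '' Set.Icc (t' i) (t' (i + 1))) ∧
            diam (γ '' Set.Icc (t' i) (t' (i + 1))) ≤ δ * diam (γ '' Set.Icc 0 1)) →
          ((∑ i ∈ Finset.range N, diam (γ '' Set.Icc (t i) (t (i + 1)))) /
              diam (γ '' Set.Icc 0 1)) /
            ((∑ i ∈ Finset.range N', diam (γ '' Set.Icc (t' i) (t' (i + 1)))) /
              diam (γ '' Set.Icc 0 1)) ≤ M₁ := by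
  intro K hK
  refine ⟨2 * (4 * K + 1) ^ 2, by nlinarith, ?_⟩
  rintro γ hγ hinj h2pt δ ⟨hδ, -⟩ N t - ht0 htN hlt hdiam N' t' hN' ht0' htN' hlt' hdiam'
  have hP : IsDeltaPartition γ δ N t := ⟨ht0, htN, hlt, hdiam⟩
  have hP' : IsDeltaPartition γ δ N' t' := ⟨ht0', htN', hlt', hdiam'⟩
  have hD := diam_image_Icc_pos hγ hinj
  have hcard := hP.card_le_mul_card hP' hγ hinj h2pt (by linarith) hδ
  rw [finrank_euclideanSpace_fin] at hcard
  show partitionIndex γ N t / partitionIndex γ N' t' ≤ _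
  calc partitionIndex γ N t / partitionIndex γ N' t' ≤ N * δ / (N' * δ / 2) :=
        div_le_div₀ (by positivity) (hP.partitionIndex_le hD) (by positivity)
          (hP'.mul_div_two_le_partitionIndex hD)
    _ = 2 * (N / N') := by field_simp
    _ ≤ 2 * (4 * K + 1) ^ 2 := by
        gcongr
        rwa [div_le_iff₀ (by positivity)]
end

section
/- Let Γ be a Jordan arc, 0 < δ < δ' < 1, and N > 1. Suppose every δ-partition of Γ has at least N elements. Then there exists a subarc Γ' ⊂ Γ and a δ'-partition P' of Γ' with |P'| ≥ N^{(log δ' + 1)/log(δδ'/2)}. -/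
/-!
Put `B = N ^ ((log δ' + 1) / log (δδ'/2))` and suppose every `δ'`-partition of every subarc
has fewer than `B` elements. Taking `δ'`-partitions `K` times, where `δδ'/2 ≤ δ'^K < δ/2`,
cuts `Γ` into at most `B ^ K` subarcs of diameter less than `(δ/2) diam Γ`. No element of a
`δ`-partition of `Γ` fits inside one of them, so a `δ`-partition of `Γ` has fewer than `B ^ K`
elements, and `B ^ K ≤ N` by the choice of `K`.
-/

open Metric Set

structure IsPartition (P : ℝ → ℝ → Prop) (a b : ℝ) (M : ℕ) (t : ℕ → ℝ) : Prop where
  pos : 0 < M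
  zero : t 0 = a
  last : t M = b
  lt : ∀ i < M, t i < t (i + 1)
  piece : ∀ i < M, P (t i) (t (i + 1))

namespace IsPartition

def concat (M : ℕ) (s t : ℕ → ℝ) : ℕ → ℝ := fun i => if i ≤ M then s i else t (i - M)

theorem forall_lt_concat {R : ℝ → ℝ → Prop} {M J : ℕ} {s t : ℕ → ℝ} (hst : s M = t 0)
    (hs : ∀ i < M, R (s i) (s (i + 1))) (ht : ∀ i < J, R (t i) (t (i + 1))) :
    ∀ i < M + J, R (concat M s t i) (concat M s t (i + 1)) := by
  intro i hi
  unfold concat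
  rcases lt_trichotomy i M with h | rfl | h
  · rw [if_pos h.le, if_pos (by omega : i + 1 ≤ M)]
    exact hs i h
  · rw [if_pos le_rfl, if_neg (by omega), hst, Nat.add_sub_cancel_left]
    exact ht 0 (by omega)
  · rw [if_neg (by omega), if_neg (by omega), show i + 1 - M = i - M + 1 by omega]
    exact ht _ (by omega)

variable {P Q : ℝ → ℝ → Prop} {a b c : ℝ} {M J : ℕ} {s t : ℕ → ℝ}

theorem one (hab : a < b) (h : P a b) :
    IsPartition P a b 1 (fun i => if i = 0 then a else b) where
  pos := one_pos
  zero := rfl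
  last := rfl
  lt i hi := by
    obtain rfl : i = 0 := by omega
    exact hab
  piece i hi := by
    obtain rfl : i = 0 := by omega
    exact h

theorem mono (ht : IsPartition P a b M t) (h : ∀ x y, P x y → Q x y) : IsPartition Q a b M t :=
  ⟨ht.pos, ht.zero, ht.last, ht.lt, fun i hi => h _ _ (ht.piece i hi)⟩

theorem le_of_le (ht : IsPartition P a b M t) {i j : ℕ} (hij : i ≤ j) (hj : j ≤ M) :
    t i ≤ t j := by
  induction j, hij using Nat.le_induction with
  | base => exact le_rfl
  | succ j _ ih => exact (ih (by omega)).trans (ht.lt j (by omega)).le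

theorem mem_Icc (ht : IsPartition P a b M t) {i : ℕ} (hi : i ≤ M) : t i ∈ Icc a b :=
  ⟨ht.zero ▸ ht.le_of_le (Nat.zero_le i) hi, ht.last ▸ ht.le_of_le hi le_rfl⟩

theorem mem_Ico (ht : IsPartition P a b M t) {i : ℕ} (hi : i < M) : t i ∈ Ico a b :=
  ⟨(ht.mem_Icc hi.le).1, (ht.lt i hi).trans_le (ht.mem_Icc hi).2⟩

theorem append (hs : IsPartition P a b M s) (ht : IsPartition P b c J t) :
    IsPartition P a c (M + J) (concat M s t) where
  pos := by have := hs.pos; omega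
  zero := by simp [concat, hs.zero]
  last := by simp [concat, ht.pos.ne', ht.last]
  lt := forall_lt_concat (hs.last.trans ht.zero.symm) hs.lt ht.lt
  piece := forall_lt_concat (hs.last.trans ht.zero.symm) hs.piece ht.piece

theorem exists_refine (ht : IsPartition P a b M t) {L : ℝ}
    (h : ∀ i < M, ∃ (J : ℕ) (s : ℕ → ℝ), (J : ℝ) ≤ L ∧ IsPartition Q (t i) (t (i + 1)) J s) :
    ∃ (J : ℕ) (s : ℕ → ℝ), (J : ℝ) ≤ M * L ∧ IsPartition Q a b J s := by
  have key : ∀ m, 1 ≤ m → m ≤ M →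
      ∃ (J : ℕ) (s : ℕ → ℝ), (J : ℝ) ≤ m * L ∧ IsPartition Q (t 0) (t m) J s := by
    intro m hm
    induction m, hm using Nat.le_induction with
    | base => intro hM; simpa using h 0 hM
    | succ m hm ih =>
      intro hM
      obtain ⟨J₁, s₁, hJ₁, hs₁⟩ := ih (by omega)
      obtain ⟨J₂, s₂, hJ₂, hs₂⟩ := h m (by omega)
      exact ⟨J₁ + J₂, _, by push_cast; linarith, hs₁.append hs₂⟩
  obtain ⟨J, s, hJ, hs⟩ := key M ht.pos le_rfl
  exact ⟨J, s, hJ, ht.zero ▸ ht.last ▸ hs⟩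

theorem exists_mem_Ico (ht : IsPartition P a b M t) {x : ℝ} (hx : x ∈ Ico a b) :
    ∃ j < M, x ∈ Ico (t j) (t (j + 1)) := by
  classical
  have hM : x < t (M - 1 + 1) := by rw [Nat.sub_add_cancel ht.pos, ht.last]; exact hx.2
  have hex : ∃ j, x < t (j + 1) := ⟨M - 1, hM⟩
  refine ⟨Nat.find hex, (Nat.find_min' hex hM).trans_lt (by have := ht.pos; omega), ?_,
    Nat.find_spec hex⟩
  rcases h : Nat.find hex with _ | j
  · exact ht.zero ▸ hx.1
  · exact not_lt.1 (Nat.find_min hex (by omega))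

/-- Every piece of `s` contains a break point of `t` in its interior, and distinct pieces
contain distinct ones. -/
theorem lt_of_not_subset (hs : IsPartition P a b M s) (ht : IsPartition Q a b J t)
    (h : ∀ i < M, ∀ j < J, ¬ (t j ≤ s i ∧ s (i + 1) ≤ t (j + 1))) : M < J := by
  choose! f hfJ hf using fun i (hi : i < M) => ht.exists_mem_Ico (hs.mem_Ico hi)
  have hlt : ∀ i < M, t (f i + 1) < s (i + 1) := fun i hi =>
    lt_of_not_ge fun h' => h i hi (f i) (hfJ i hi) ⟨(hf i hi).1, h'⟩
  have hmaps : ∀ i < M, f i + 1 < J := by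
    intro i hi
    refine lt_of_le_of_ne (hfJ i hi) fun hJ => ?_
    have := hlt i hi
    rw [hJ, ht.last] at this
    exact this.not_ge (hs.mem_Icc hi).2
  have hne : ∀ i i', i < i' → i' < M → f i ≠ f i' := fun i i' hii' hi' hfi =>
    ((hlt i (hii'.trans hi')).trans_le (hs.le_of_le hii' hi'.le)).not_ge
      (hfi ▸ (hf i' hi').2.le)
  have hcard := Finset.card_le_card_of_injOn (s := Finset.range M) (t := Finset.range (J - 1)) f
    (fun i hi => by
      simp only [Finset.coe_range, mem_Iio] at hi ⊢
      have := hmaps i hi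
      omega)
    (fun i hi i' hi' hfi => by
      simp only [Finset.coe_range, mem_Iio] at hi hi'
      by_contra! hii'
      rcases hii'.lt_or_gt with hlt' | hlt'
      · exact hne i i' hlt' hi' hfi
      · exact hne i' i hlt' hi hfi.symm)
  simp only [Finset.card_range] at hcard
  have := ht.pos
  omega

end IsPartition

section Arc

variable {X : Type*} [PseudoMetricSpace X] {γ : ℝ → X} {u v : ℝ}

theorem diam_image_Icc_le_add {w : ℝ} (huv : u ≤ v) (hvw : v ≤ w) :
    diam (γ '' Icc u w) ≤ diam (γ '' Icc u v) + diam (γ '' Icc v w) := by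
  rw [← Icc_union_Icc_eq_Icc huv hvw, image_union]
  exact diam_union' ⟨γ v, mem_image_of_mem _ (right_mem_Icc.2 huv),
    mem_image_of_mem _ (left_mem_Icc.2 hvw)⟩

theorem lt_of_diam_image_Icc_pos (h : 0 < diam (γ '' Icc u v)) : u < v := by
  by_contra! hvu
  rw [diam_subsingleton ((subsingleton_Icc_of_ge hvu).image γ)] at h
  exact h.false

theorem diam_image_Icc_mono (hγ : ContinuousOn γ (Icc 0 1)) (hu : 0 ≤ u) (hv : v ≤ 1)
    {u' v' : ℝ} (hu' : u ≤ u') (hv' : v' ≤ v) : diam (γ '' Icc u' v') ≤ diam (γ '' Icc u v) :=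
  diam_mono (image_mono (Icc_subset_Icc hu' hv'))
    (isCompact_Icc.image_of_continuousOn (hγ.mono (Icc_subset_Icc hu hv))).isBounded

theorem exists_forall_diam_image_Icc_le (hγ : ContinuousOn γ (Icc 0 1)) {ε : ℝ} (hε : 0 < ε) :
    ∃ η > 0, ∀ u v, 0 ≤ u → v ≤ 1 → v - u < η → diam (γ '' Icc u v) ≤ ε := by
  obtain ⟨η, hη, H⟩ := Metric.uniformContinuousOn_iff.1
    (isCompact_Icc.uniformContinuousOn_of_continuous hγ) ε hε
  refine ⟨η, hη, fun u v hu hv huv => diam_le_of_forall_dist_le hε.le ?_⟩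
  rintro _ ⟨x, hx, rfl⟩ _ ⟨y, hy, rfl⟩
  have hsub := Icc_subset_Icc hu hv
  exact (H x (hsub hx) y (hsub hy) ((Real.dist_le_of_mem_Icc hx hy).trans_lt huv)).le

theorem dist_diam_image_Icc_le (hγ : ContinuousOn γ (Icc 0 1)) (hu : 0 ≤ u) {s s' : ℝ}
    (hs : u ≤ s) (hss' : s ≤ s') (hs' : s' ≤ 1) :
    dist (diam (γ '' Icc u s')) (diam (γ '' Icc u s)) ≤ diam (γ '' Icc s s') := by
  rw [Real.dist_eq, abs_le]
  constructor
  · linarith [diam_image_Icc_mono (γ := γ) hγ hu hs' le_rfl hss', diam_nonneg (s := γ '' Icc s s')]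
  · linarith [diam_image_Icc_le_add (γ := γ) hs hss']

theorem continuousOn_diam_image_Icc (hγ : ContinuousOn γ (Icc 0 1)) (hu : 0 ≤ u) :
    ContinuousOn (fun s => diam (γ '' Icc u s)) (Icc u 1) := by
  refine Metric.continuousOn_iff.2 fun s hs ε hε => ?_
  obtain ⟨η, hη, hsmall⟩ := exists_forall_diam_image_Icc_le hγ (half_pos hε)
  refine ⟨η, hη, fun s' hs' hss' => ?_⟩
  have hlen := abs_lt.1 (Real.dist_eq s' s ▸ hss')
  refine lt_of_le_of_lt ?_ (half_lt_self hε)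
  rcases le_total s s' with h | h
  · exact (dist_diam_image_Icc_le hγ hu hs.1 h hs'.2).trans
      (hsmall s s' (hu.trans hs.1) hs'.2 (by linarith))
  · rw [dist_comm]
    exact (dist_diam_image_Icc_le hγ hu hs'.1 h hs.2).trans
      (hsmall s' s (hu.trans hs'.1) hs.2 (by linarith))

/-- Cut off initial subarcs of diameter exactly `c` while the remainder has diameter more than
`2 * c`; each cut is longer than the modulus of uniform continuity for `c / 2`, which bounds
the number of steps. -/
theorem exists_isPartition_diam_mem_Icc (hγ : ContinuousOn γ (Icc 0 1)) {c : ℝ} (hc : 0 < c)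
    (hu : 0 ≤ u) (hv : v ≤ 1) (hcd : c ≤ diam (γ '' Icc u v)) :
    ∃ (M : ℕ) (t : ℕ → ℝ),
      IsPartition (fun x y => c ≤ diam (γ '' Icc x y) ∧ diam (γ '' Icc x y) ≤ 2 * c) u v M t := by
  obtain ⟨η, hη, hsmall⟩ := exists_forall_diam_image_Icc_le hγ (half_pos hc)
  obtain ⟨n, hn⟩ := exists_nat_ge ((v - u) / η)
  rw [div_le_iff₀ hη] at hn
  have huv := lt_of_diam_image_Icc_pos (hc.trans_le hcd)
  induction n generalizing u with
  | zero =>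
    rw [Nat.cast_zero, zero_mul] at hn
    linarith
  | succ n ih =>
    by_cases hd : diam (γ '' Icc u v) ≤ 2 * c
    · exact ⟨1, _, IsPartition.one huv ⟨hcd, hd⟩⟩
    obtain ⟨s, hs, hsc⟩ := intermediate_value_Icc huv.le
      ((continuousOn_diam_image_Icc hγ hu).mono (Icc_subset_Icc_right hv))
      (show c ∈ Icc (diam (γ '' Icc u u)) (diam (γ '' Icc u v)) by simpa using ⟨hc.le, hcd⟩)
    simp only at hsc
    have hus : u < s := lt_of_diam_image_Icc_pos (hsc ▸ hc)
    have hrest : c ≤ diam (γ '' Icc s v) := by linarith [diam_image_Icc_le_add (γ := γ) hs.1 hs.2]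
    have hlen : η ≤ s - u := by
      by_contra! h
      linarith [hsmall u s hu (hs.2.trans hv) h]
    obtain ⟨M, t, ht⟩ := ih (hu.trans hus.le) hrest (by push_cast at hn; linarith)
      (lt_of_diam_image_Icc_pos (hc.trans_le hrest))
    exact ⟨1 + M, _, (IsPartition.one hus ⟨hsc.ge, by linarith⟩).append ht⟩

abbrev IsDeltaPartition_s6 (γ' : ℝ → X) (δ a b : ℝ) : ℕ → (ℕ → ℝ) → Prop :=
  IsPartition (fun x y => δ / 2 * diam (γ' '' Icc a b) ≤ diam (γ' '' Icc x y) ∧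
    diam (γ' '' Icc x y) ≤ δ * diam (γ' '' Icc a b)) a b

theorem exists_isDeltaPartition (hγ : ContinuousOn γ (Icc 0 1)) {δ : ℝ} (hδ : 0 < δ)
    (hδ2 : δ ≤ 2) (hu : 0 ≤ u) (huv : u < v) (hv : v ≤ 1) :
    ∃ (M : ℕ) (t : ℕ → ℝ), IsDeltaPartition_s6 γ δ u v M t := by
  rcases (diam_nonneg (s := γ '' Icc u v)).eq_or_lt with hd | hd
  · exact ⟨1, _, IsPartition.one huv (by simp [← hd])⟩
  obtain ⟨M, t, ht⟩ := exists_isPartition_diam_mem_Icc hγ (by positivity) hu hv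
    (show δ / 2 * diam (γ '' Icc u v) ≤ diam (γ '' Icc u v) by nlinarith)
  exact ⟨M, t, ht.mono fun x y h => ⟨h.1, by linarith [h.2]⟩⟩

theorem exists_isPartition_diam_lt {ρ B c : ℝ} (hρ : 0 ≤ ρ)
    (hsplit : ∀ u v, 0 ≤ u → u < v → v ≤ 1 → ∃ (M : ℕ) (t : ℕ → ℝ), (M : ℝ) ≤ B ∧
      IsPartition (fun x y => diam (γ '' Icc x y) ≤ ρ * diam (γ '' Icc u v)) u v M t)
    (k : ℕ) (hu : 0 ≤ u) (huv : u < v) (hv : v ≤ 1) (hd : ρ ^ k * diam (γ '' Icc u v) < c) :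
    ∃ (J : ℕ) (t : ℕ → ℝ), (J : ℝ) ≤ B ^ k ∧
      IsPartition (fun x y => diam (γ '' Icc x y) < c) u v J t := by
  induction k generalizing u v with
  | zero => exact ⟨1, _, by simp, IsPartition.one huv (by simpa using hd)⟩
  | succ k ih =>
    obtain ⟨M, t, hMB, ht⟩ := hsplit u v hu huv hv
    obtain ⟨J, s, hJ, hs⟩ := ht.exists_refine (L := B ^ k) fun i hi =>
      ih (hu.trans (ht.mem_Icc hi.le).1) (ht.lt i hi) ((ht.mem_Icc hi).2.trans hv) <| calc
        ρ ^ k * diam (γ '' Icc (t i) (t (i + 1))) ≤ ρ ^ k * (ρ * diam (γ '' Icc u v)) :=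
          mul_le_mul_of_nonneg_left (ht.piece i hi) (pow_nonneg hρ k)
        _ = ρ ^ (k + 1) * diam (γ '' Icc u v) := by ring
        _ < c := hd
    refine ⟨J, s, hJ.trans ?_, hs⟩
    rw [pow_succ']
    exact mul_le_mul_of_nonneg_right hMB (pow_nonneg ((M.cast_nonneg).trans hMB) k)

theorem card_lt_pow_of_forall_card_lt (hγ : ContinuousOn γ (Icc 0 1)) {δ δ' B : ℝ}
    (hδ'0 : 0 < δ') (hδ'2 : δ' ≤ 2) {K : ℕ} (hK : δ' ^ K < δ / 2)
    (hD : 0 < diam (γ '' Icc 0 1))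
    (hsmall : ∀ u v, 0 ≤ u → u < v → v ≤ 1 → ∀ M t, IsDeltaPartition_s6 γ δ' u v M t → (M : ℝ) < B)
    {M : ℕ} {s : ℕ → ℝ} (hs : IsDeltaPartition_s6 γ δ 0 1 M s) : (M : ℝ) < B ^ K := by
  have hsplit : ∀ u v, 0 ≤ u → u < v → v ≤ 1 → ∃ (M : ℕ) (t : ℕ → ℝ), (M : ℝ) ≤ B ∧
      IsPartition (fun x y => diam (γ '' Icc x y) ≤ δ' * diam (γ '' Icc u v)) u v M t := by
    intro u v hu huv hv
    obtain ⟨M, t, ht⟩ := exists_isDeltaPartition hγ hδ'0 hδ'2 hu huv hv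
    exact ⟨M, t, (hsmall u v hu huv hv M t ht).le, ht.mono fun _ _ h => h.2⟩
  obtain ⟨J, t, hJ, ht⟩ := exists_isPartition_diam_lt hδ'0.le hsplit K le_rfl one_pos le_rfl
    (mul_lt_mul_of_pos_right hK hD)
  have hMJ : M < J := hs.lt_of_not_subset ht fun i hi j hj hsub =>
    (ht.piece j hj).not_ge <| (hs.piece i hi).1.trans <|
      diam_image_Icc_mono hγ (ht.mem_Icc hj.le).1 (ht.mem_Icc hj).2 hsub.1 hsub.2
  exact (Nat.cast_lt.2 hMJ).trans_le hJ

end Arc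

theorem rpow_pow_le_self {N ℓ L : ℝ} {K : ℕ} (hN : 1 ≤ N) (hL : L < 0) (hK : L ≤ K * ℓ) :
    (N ^ ((ℓ + 1) / L)) ^ K ≤ N := by
  have hexp : (ℓ + 1) / L * K ≤ 1 := by
    rw [div_mul_eq_mul_div, div_le_one_of_neg hL]
    nlinarith [K.cast_nonneg (α := ℝ)]
  calc (N ^ ((ℓ + 1) / L)) ^ K = N ^ ((ℓ + 1) / L * K) := by
        rw [← Real.rpow_natCast, ← Real.rpow_mul (by linarith)]
    _ ≤ N ^ (1 : ℝ) := Real.rpow_le_rpow_of_exponent_le hN hexp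
    _ = N := Real.rpow_one N

theorem subarc_with_large_partition_general
    (γ : ℝ → EuclideanSpace ℝ (Fin 2))
    (hcont : ContinuousOn γ (Set.Icc 0 1))
    (δ δ' : ℝ) (hδ : 0 < δ) (hδδ' : δ < δ') (hδ' : δ' < 1)
    (N : ℝ) (hN : 1 < N)
    (hbig : ∀ (M : ℕ) (t : ℕ → ℝ), 0 < M → t 0 = 0 → t M = 1 →
      (∀ i < M, t i < t (i + 1)) →
      (∀ i < M,
        δ / 2 * diam (γ '' Set.Icc 0 1) ≤ diam (γ '' Set.Icc (t i) (t (i + 1))) ∧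
        diam (γ '' Set.Icc (t i) (t (i + 1))) ≤ δ * diam (γ '' Set.Icc 0 1)) →
      N ≤ (M : ℝ)) :
    ∃ a b : ℝ, 0 ≤ a ∧ a < b ∧ b ≤ 1 ∧
      ∃ (M : ℕ) (t : ℕ → ℝ), 0 < M ∧ t 0 = a ∧ t M = b ∧
        (∀ i < M, t i < t (i + 1)) ∧
        (∀ i < M,
          δ' / 2 * diam (γ '' Set.Icc a b) ≤ diam (γ '' Set.Icc (t i) (t (i + 1))) ∧
          diam (γ '' Set.Icc (t i) (t (i + 1))) ≤ δ' * diam (γ '' Set.Icc a b)) ∧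
        N ^ ((Real.log δ' + 1) / Real.log (δ * δ' / 2)) ≤ (M : ℝ) := by
  have hbig' : ∀ M t, IsDeltaPartition_s6 γ δ 0 1 M t → N ≤ M := fun M t ht =>
    hbig M t ht.pos ht.zero ht.last ht.lt ht.piece
  have hD : 0 < diam (γ '' Icc 0 1) := by
    by_contra! hD_nonpos
    have hD0 := hD_nonpos.antisymm diam_nonneg
    have h1 := hbig' 1 _ (IsPartition.one one_pos (by simp [hD0]))
    rw [Nat.cast_one] at h1
    linarith
  have hδ'0 : 0 < δ' := hδ.trans hδδ'
  obtain ⟨n, hn, hn'⟩ := exists_nat_pow_near_of_lt_one (half_pos hδ) (by linarith) hδ'0 hδ'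
  have hK : Real.log (δ * δ' / 2) ≤ (n + 1 : ℕ) * Real.log δ' := by
    rw [← Real.log_pow, pow_succ]
    exact Real.log_le_log (by positivity) (by nlinarith)
  by_contra! hsmall
  obtain ⟨M, s, hs⟩ := exists_isDeltaPartition hcont hδ (by linarith) le_rfl one_pos le_rfl
  have hMB := card_lt_pow_of_forall_card_lt hcont hδ'0 (by linarith) hn hD
    (fun u v hu huv hv M t ht => hsmall u v hu huv hv M t ht.pos ht.zero ht.last ht.lt ht.piece) hs
  have hBN := rpow_pow_le_self hN.le (Real.log_neg (by positivity) (by nlinarith)) hK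
  linarith [hbig' M s hs]

/-- Let `Γ` be a Jordan arc, `0 < δ < δ' < 1` and `N > 1`. If every
`δ`-partition of `Γ` has at least `N` elements, then there is a subarc `Γ' ⊆ Γ` and a
`δ'`-partition `P'` of `Γ'` with `|P'| ≥ N^((log δ' + 1)/log(δδ'/2))`. -/
theorem subarc_with_large_partition
    (γ : ℝ → EuclideanSpace ℝ (Fin 2))
    (hcont : ContinuousOn γ (Set.Icc 0 1))
    (hinj : Set.InjOn γ (Set.Icc 0 1))
    (δ δ' : ℝ) (hδ : 0 < δ) (hδδ' : δ < δ') (hδ' : δ' < 1)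
    (N : ℝ) (hN : 1 < N)
    (hbig : ∀ (M : ℕ) (t : ℕ → ℝ), 0 < M → t 0 = 0 → t M = 1 →
      (∀ i < M, t i < t (i + 1)) →
      (∀ i < M,
        δ / 2 * diam (γ '' Set.Icc 0 1) ≤ diam (γ '' Set.Icc (t i) (t (i + 1))) ∧
        diam (γ '' Set.Icc (t i) (t (i + 1))) ≤ δ * diam (γ '' Set.Icc 0 1)) →
      N ≤ (M : ℝ)) :
    ∃ a b : ℝ, 0 ≤ a ∧ a < b ∧ b ≤ 1 ∧
      ∃ (M : ℕ) (t : ℕ → ℝ), 0 < M ∧ t 0 = a ∧ t M = b ∧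
        (∀ i < M, t i < t (i + 1)) ∧
        (∀ i < M,
          δ' / 2 * diam (γ '' Set.Icc a b) ≤ diam (γ '' Set.Icc (t i) (t (i + 1))) ∧
          diam (γ '' Set.Icc (t i) (t (i + 1))) ≤ δ' * diam (γ '' Set.Icc a b)) ∧
        N ^ ((Real.log δ' + 1) / Real.log (δ * δ' / 2)) ≤ (M : ℝ) :=
  subarc_with_large_partition_general γ hcont δ δ' hδ hδδ' hδ' N hN hbig
end

section
/- If Γ is a rectifiable Jordan curve in ℝ² such that ℓ(γ(x,y)) ≤ C|x−y| for all x,y ∈ Γ (where γ(x,y) is the subarc of smaller diameter), then Γ satisfies the weak chord-arc property: there exists M₀ > 0 such that every subarc Γ' ⊂ Γ with diam(Γ') < 1 admits a diam(Γ')-partition P with M(Γ',P) ≤ M₀. -/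
/-!
By the chord-arc condition an arc is at most `2C` times as long as it is wide: split it at a point
where the two halves have equal diameter, so that each half is the smaller arc in the condition.
Now cut an arc `Γ'` of diameter `d < 1` from one end into consecutive pieces of diameter
`d² / 2` until the rest has diameter at most `d²`. Each piece uses up length at least `d² / 2` of
`ℓ(Γ') ≤ 2C d`, so this stops, and the diameters of the pieces add up to at most `ℓ(Γ') ≤ 2C d`;
hence `M₀ = 2C` works.
-/

open Metric Set Bornology

section DiamImageIcc

variable {E F : Type*} [PseudoMetricSpace E] [PseudoMetricSpace F] {f : ℝ → E} {a b : ℝ}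

lemma diam_image_Icc_le_add_s7 (f : ℝ → E) {s t u : ℝ} (hst : s ≤ t) (htu : t ≤ u) :
    diam (f '' Icc s u) ≤ diam (f '' Icc s t) + diam (f '' Icc t u) := by
  rw [← Icc_union_Icc_eq_Icc hst htu, image_union]
  simpa using diam_union (mem_image_of_mem f (right_mem_Icc.2 hst))
    (mem_image_of_mem f (left_mem_Icc.2 htu))

lemma diam_image_Icc_self (f : ℝ → E) (t : ℝ) : diam (f '' Icc t t) = 0 := by
  rw [Icc_self, image_singleton, diam_singleton]

lemma ofReal_diam_image_le_eVariationOn (f : ℝ → E) (s : Set ℝ) :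
    ENNReal.ofReal (diam (f '' s)) ≤ eVariationOn f s :=
  ENNReal.ofReal_toReal_le.trans <| ediam_le <| by
    rintro _ ⟨x, hx, rfl⟩ _ ⟨y, hy, rfl⟩
    exact eVariationOn.edist_le f hx hy

lemma eVariationOn_Icc_add_Icc (f : ℝ → E) {s t u : ℝ} (hst : s ≤ t) (htu : t ≤ u) :
    eVariationOn f (Icc s t) + eVariationOn f (Icc t u) = eVariationOn f (Icc s u) := by
  simpa only [univ_inter] using eVariationOn.Icc_add_Icc f hst htu (mem_univ t)

lemma dist_diam_image_Icc_right_le (hbdd : IsBounded (f '' Icc a b)) {s t : ℝ}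
    (hs : s ∈ Icc a b) (ht : t ∈ Icc a b) :
    dist (diam (f '' Icc a s)) (diam (f '' Icc a t)) ≤ diam (f '' uIcc s t) := by
  wlog hst : s ≤ t generalizing s t
  · rw [dist_comm, uIcc_comm]
    exact this ht hs (le_of_not_ge hst)
  have hmono : diam (f '' Icc a s) ≤ diam (f '' Icc a t) :=
    diam_mono (image_mono (Icc_subset_Icc_right hst)) (hbdd.subset (image_mono
      (Icc_subset_Icc_right ht.2)))
  rw [uIcc_of_le hst, Real.dist_eq, abs_of_nonpos (sub_nonpos.2 hmono)]
  linarith [diam_image_Icc_le_add_s7 f hs.1 hst]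

lemma dist_diam_image_Icc_left_le (hbdd : IsBounded (f '' Icc a b)) {s t : ℝ}
    (hs : s ∈ Icc a b) (ht : t ∈ Icc a b) :
    dist (diam (f '' Icc s b)) (diam (f '' Icc t b)) ≤ diam (f '' uIcc s t) := by
  wlog hst : s ≤ t generalizing s t
  · rw [dist_comm, uIcc_comm]
    exact this ht hs (le_of_not_ge hst)
  have hmono : diam (f '' Icc t b) ≤ diam (f '' Icc s b) :=
    diam_mono (image_mono (Icc_subset_Icc_left hst)) (hbdd.subset (image_mono
      (Icc_subset_Icc_left hs.1)))
  rw [uIcc_of_le hst, Real.dist_eq, abs_of_nonneg (sub_nonneg.2 hmono)]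
  linarith [diam_image_Icc_le_add_s7 f hst ht.2]

lemma uniformContinuousOn_of_dist_le_diam_image_uIcc (hf : ContinuousOn f (Icc a b))
    {g : ℝ → F}
    (hg : ∀ s ∈ Icc a b, ∀ t ∈ Icc a b, dist (g s) (g t) ≤ diam (f '' uIcc s t)) :
    UniformContinuousOn g (Icc a b) := by
  rw [Metric.uniformContinuousOn_iff]
  intro ε hε
  obtain ⟨δ, hδ, hfδ⟩ := Metric.uniformContinuousOn_iff.1
    (isCompact_Icc.uniformContinuousOn_of_continuous hf) (ε / 2) (half_pos hε)
  refine ⟨δ, hδ, fun s hs t ht hst => (hg s hs t ht).trans_lt ?_⟩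
  have hsub : uIcc s t ⊆ Icc a b := uIcc_subset_Icc hs ht
  refine (diam_le_of_forall_dist_le (half_pos hε).le ?_).trans_lt (half_lt_self hε)
  rintro _ ⟨u, hu, rfl⟩ _ ⟨v, hv, rfl⟩
  exact (hfδ u (hsub hu) v (hsub hv) ((Real.dist_le_of_mem_uIcc hu hv).trans_lt hst)).le

lemma continuousOn_diam_image_Icc_right (hf : ContinuousOn f (Icc a b)) :
    ContinuousOn (fun t => diam (f '' Icc a t)) (Icc a b) :=
  (uniformContinuousOn_of_dist_le_diam_image_uIcc hf fun _ hs _ ht =>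
    dist_diam_image_Icc_right_le (isCompact_Icc.image_of_continuousOn hf).isBounded hs ht)
    |>.continuousOn

lemma continuousOn_diam_image_Icc_left (hf : ContinuousOn f (Icc a b)) :
    ContinuousOn (fun t => diam (f '' Icc t b)) (Icc a b) :=
  (uniformContinuousOn_of_dist_le_diam_image_uIcc hf fun _ hs _ ht =>
    dist_diam_image_Icc_left_le (isCompact_Icc.image_of_continuousOn hf).isBounded hs ht)
    |>.continuousOn

lemma exists_diam_image_Icc_eq (hf : ContinuousOn f (Icc a b)) (hab : a ≤ b) :
    ∃ m ∈ Icc a b, diam (f '' Icc a m) = diam (f '' Icc m b) := by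
  have hcont : ContinuousOn (fun t => diam (f '' Icc a t) - diam (f '' Icc t b)) (Icc a b) :=
    (continuousOn_diam_image_Icc_right hf).sub (continuousOn_diam_image_Icc_left hf)
  have hzero : (0 : ℝ) ∈ Icc (diam (f '' Icc a a) - diam (f '' Icc a b))
      (diam (f '' Icc a b) - diam (f '' Icc b b)) := by
    simp only [diam_image_Icc_self, zero_sub, sub_zero, mem_Icc, neg_nonpos, diam_nonneg,
      and_self]
  obtain ⟨m, hm, hm0⟩ := intermediate_value_Icc hab hcont hzero
  exact ⟨m, hm, sub_eq_zero.1 hm0⟩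

end DiamImageIcc

section ChordArc

variable {E : Type*} [PseudoMetricSpace E] {γ : ℝ → E} {C a b : ℝ}

/-- Cut `[a, b]` at a point `m` where the two halves have equal diameters: each half is then no
larger than its complementary arc, so the chord-arc inequality applies to both halves. -/
theorem eVariationOn_le_two_mul_diam_of_chordArc (hγ : ContinuousOn γ (Icc 0 1)) (hC : 0 ≤ C)
    (hCA : ∀ a b : ℝ, 0 ≤ a → a ≤ b → b ≤ 1 →
      diam (γ '' Icc a b) ≤ diam (γ '' (Icc 0 a ∪ Icc b 1)) →
        eVariationOn γ (Icc a b) ≤ ENNReal.ofReal (C * dist (γ a) (γ b)))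
    (ha : 0 ≤ a) (hab : a ≤ b) (hb : b ≤ 1) :
    eVariationOn γ (Icc a b) ≤ ENNReal.ofReal (2 * C * diam (γ '' Icc a b)) := by
  have hbdd : IsBounded (γ '' Icc 0 1) := (isCompact_Icc.image_of_continuousOn hγ).isBounded
  have hbddCompl : ∀ {p q : ℝ}, p ≤ 1 → 0 ≤ q →
      IsBounded (γ '' (Icc 0 p ∪ Icc q 1)) :=
    fun hp hq => hbdd.subset (image_mono (union_subset (Icc_subset_Icc_right hp)
      (Icc_subset_Icc_left hq)))
  have hbddIcc : ∀ {p q : ℝ}, 0 ≤ p → q ≤ 1 → IsBounded (γ '' Icc p q) :=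
    fun hp hq => hbdd.subset (image_mono (Icc_subset_Icc hp hq))
  have harc : ∀ p q, 0 ≤ p → p ≤ q → q ≤ 1 →
      diam (γ '' Icc p q) ≤ diam (γ '' (Icc 0 p ∪ Icc q 1)) →
        eVariationOn γ (Icc p q) ≤ ENNReal.ofReal (C * diam (γ '' Icc p q)) := by
    intro p q hp hpq hq hsmall
    refine (hCA p q hp hpq hq hsmall).trans (ENNReal.ofReal_le_ofReal ?_)
    gcongr
    exact dist_le_diam_of_mem (hbddIcc hp hq) (mem_image_of_mem γ (left_mem_Icc.2 hpq))
      (mem_image_of_mem γ (right_mem_Icc.2 hpq))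
  obtain ⟨m, hm, hbal⟩ := exists_diam_image_Icc_eq (hγ.mono (Icc_subset_Icc ha hb)) hab
  have hleft : diam (γ '' Icc a m) ≤ diam (γ '' (Icc 0 a ∪ Icc m 1)) :=
    hbal ▸ diam_mono (image_mono ((Icc_subset_Icc_right hb).trans subset_union_right))
      (hbddCompl (hab.trans hb) (ha.trans hm.1))
  have hright : diam (γ '' Icc m b) ≤ diam (γ '' (Icc 0 m ∪ Icc b 1)) :=
    hbal ▸ diam_mono (image_mono ((Icc_subset_Icc_left ha).trans subset_union_left))
      (hbddCompl (hm.2.trans hb) (ha.trans hab))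
  calc eVariationOn γ (Icc a b) = eVariationOn γ (Icc a m) + eVariationOn γ (Icc m b) :=
        (eVariationOn_Icc_add_Icc γ hm.1 hm.2).symm
    _ ≤ ENNReal.ofReal (C * diam (γ '' Icc a m)) + ENNReal.ofReal (C * diam (γ '' Icc m b)) :=
        add_le_add (harc a m ha hm.1 (hm.2.trans hb) hleft)
          (harc m b (ha.trans hm.1) hm.2 hb hright)
    _ ≤ ENNReal.ofReal (C * diam (γ '' Icc a b)) +
          ENNReal.ofReal (C * diam (γ '' Icc a b)) := by
        gcongr
        · exact diam_mono (image_mono (Icc_subset_Icc_right hm.2)) (hbddIcc ha hb)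
        · exact diam_mono (image_mono (Icc_subset_Icc_left hm.1)) (hbddIcc ha hb)
    _ = ENNReal.ofReal (2 * C * diam (γ '' Icc a b)) := by
        rw [← ENNReal.ofReal_add (by positivity) (by positivity)]
        ring_nf

end ChordArc

section Partition

variable {E : Type*} [PseudoMetricSpace E] {f : ℝ → E} {δ ε a b : ℝ}

def IsDiamPartition (f : ℝ → E) (δ ε a b : ℝ) (N : ℕ) (t : ℕ → ℝ) : Prop :=
  t 0 = a ∧ t N = b ∧ (∀ i < N, t i < t (i + 1)) ∧
    ∀ i < N, δ ≤ diam (f '' Icc (t i) (t (i + 1))) ∧ diam (f '' Icc (t i) (t (i + 1))) ≤ ε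

lemma IsDiamPartition.cons {N : ℕ} {t : ℕ → ℝ} {u : ℝ}
    (ht : IsDiamPartition f δ ε u b N t)
    (hau : a < u) (hδ : δ ≤ diam (f '' Icc a u)) (hε : diam (f '' Icc a u) ≤ ε) :
    IsDiamPartition f δ ε a b (N + 1) (fun | 0 => a | i + 1 => t i) := by
  obtain ⟨ht0, htN, hmono, hdiam⟩ := ht
  refine ⟨rfl, htN, fun i hi => ?_, fun i hi => ?_⟩
  · cases i with
    | zero => simpa [ht0] using hau
    | succ i => exact hmono i (by omega)
  · cases i with
    | zero => simpa [ht0] using ⟨hδ, hε⟩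
    | succ i => exact hdiam i (by omega)

lemma exists_isDiamPartition_of_eVariationOn_lt (hf : ContinuousOn f (Icc a b)) (hδ : 0 < δ)
    (hδε : 2 * δ ≤ ε) (hdiam : δ ≤ diam (f '' Icc a b)) (n : ℕ)
    (hn : eVariationOn f (Icc a b) < n * ENNReal.ofReal δ) :
    ∃ N t, IsDiamPartition f δ ε a b N t ∧
      ENNReal.ofReal (∑ i ∈ Finset.range N, diam (f '' Icc (t i) (t (i + 1)))) ≤
        eVariationOn f (Icc a b) := by
  induction n generalizing a with
  | zero => simp at hn
  | succ n ih =>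
    have hab : a < b := by
      by_contra! hba
      rw [diam_subsingleton ((subsingleton_Icc_of_ge hba).image f)] at hdiam
      linarith
    by_cases hsmall : diam (f '' Icc a b) ≤ ε
    · refine ⟨1, _, (show IsDiamPartition f δ ε b b 0 fun _ => b from
        ⟨rfl, rfl, by simp, by simp⟩).cons hab hdiam hsmall, ?_⟩
      simpa using ofReal_diam_image_le_eVariationOn f (Icc a b)
    obtain ⟨u, hu, hau⟩ : ∃ u ∈ Ioo a b, diam (f '' Icc a u) = δ :=
      intermediate_value_Ioo hab.le (continuousOn_diam_image_Icc_right hf)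
        ⟨by rwa [diam_image_Icc_self], by linarith⟩
    have hδu : δ ≤ diam (f '' Icc u b) := by
      linarith [diam_image_Icc_le_add_s7 f hu.1.le hu.2.le]
    have hsplit := eVariationOn_Icc_add_Icc f hu.1.le hu.2.le
    have hvar_au : ENNReal.ofReal δ ≤ eVariationOn f (Icc a u) :=
      hau ▸ ofReal_diam_image_le_eVariationOn f (Icc a u)
    have hvar_ub : eVariationOn f (Icc u b) < n * ENNReal.ofReal δ := by
      have hfin : eVariationOn f (Icc a u) ≠ ⊤ :=
        ne_top_of_lt ((eVariationOn.mono f (Icc_subset_Icc_right hu.2.le)).trans_lt hn)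
      rw [← ENNReal.add_lt_add_iff_left hfin, hsplit]
      calc eVariationOn f (Icc a b) < (n + 1 : ℕ) * ENNReal.ofReal δ := hn
        _ = ENNReal.ofReal δ + n * ENNReal.ofReal δ := by push_cast; ring
        _ ≤ eVariationOn f (Icc a u) + n * ENNReal.ofReal δ := by gcongr
    obtain ⟨N, t, ht, hsum⟩ := ih (hf.mono (Icc_subset_Icc_left hu.1.le)) hδu hvar_ub
    refine ⟨N + 1, _, ht.cons hu.1 hau.ge (by linarith), ?_⟩
    calc ENNReal.ofReal (∑ i ∈ Finset.range (N + 1), _)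
        = ENNReal.ofReal (∑ i ∈ Finset.range N, diam (f '' Icc (t i) (t (i + 1))) +
            diam (f '' Icc a u)) := by rw [Finset.sum_range_succ', ← ht.1]
      _ = ENNReal.ofReal (∑ i ∈ Finset.range N, diam (f '' Icc (t i) (t (i + 1)))) +
            ENNReal.ofReal (diam (f '' Icc a u)) :=
          ENNReal.ofReal_add (Finset.sum_nonneg fun _ _ => diam_nonneg) diam_nonneg
      _ ≤ eVariationOn f (Icc u b) + eVariationOn f (Icc a u) :=
          add_le_add hsum (ofReal_diam_image_le_eVariationOn f _)
      _ = eVariationOn f (Icc a b) := by rw [add_comm, hsplit]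

theorem exists_isDiamPartition (hf : ContinuousOn f (Icc a b))
    (hvar : eVariationOn f (Icc a b) ≠ ⊤) (hδ : 0 < δ) (hδε : 2 * δ ≤ ε)
    (hdiam : δ ≤ diam (f '' Icc a b)) :
    ∃ N t, IsDiamPartition f δ ε a b N t ∧
      ENNReal.ofReal (∑ i ∈ Finset.range N, diam (f '' Icc (t i) (t (i + 1)))) ≤
        eVariationOn f (Icc a b) :=
  let ⟨n, hn⟩ := ENNReal.exists_nat_mul_gt (ENNReal.ofReal_pos.2 hδ).ne' hvar
  exists_isDiamPartition_of_eVariationOn_lt hf hδ hδε hdiam n hn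

end Partition

theorem chord_arc_implies_weak_chord_arc_general
    (γ : ℝ → EuclideanSpace ℝ (Fin 2))
    (hcont : ContinuousOn γ (Set.Icc 0 1))
    (hinj : Set.InjOn γ (Set.Ico 0 1))
    (C : ℝ) (hC : 0 < C)
    (hCA : ∀ a b : ℝ, 0 ≤ a → a ≤ b → b ≤ 1 →
      (diam (γ '' Set.Icc a b) ≤ diam (γ '' (Set.Icc 0 a ∪ Set.Icc b 1)) →
        eVariationOn γ (Set.Icc a b) ≤ ENNReal.ofReal (C * dist (γ a) (γ b))) ∧
      (diam (γ '' (Set.Icc 0 a ∪ Set.Icc b 1)) ≤ diam (γ '' Set.Icc a b) →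
        eVariationOn γ (Set.Icc 0 a) + eVariationOn γ (Set.Icc b 1) ≤
          ENNReal.ofReal (C * dist (γ a) (γ b)))) :
    ∃ M₀ : ℝ, 0 < M₀ ∧
      ∀ a b : ℝ, 0 ≤ a → a < b → b ≤ 1 → diam (γ '' Set.Icc a b) < 1 →
        ∃ (N : ℕ) (t : ℕ → ℝ), 0 < N ∧ t 0 = a ∧ t N = b ∧
          (∀ i < N, t i < t (i + 1)) ∧
          (∀ i < N,
            diam (γ '' Set.Icc a b) / 2 * diam (γ '' Set.Icc a b) ≤
              diam (γ '' Set.Icc (t i) (t (i + 1))) ∧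
            diam (γ '' Set.Icc (t i) (t (i + 1))) ≤
              diam (γ '' Set.Icc a b) * diam (γ '' Set.Icc a b)) ∧
          (∑ i ∈ Finset.range N, diam (γ '' Set.Icc (t i) (t (i + 1)))) /
              diam (γ '' Set.Icc a b) ≤ M₀ := by
  refine ⟨2 * C, by positivity, fun a b ha hab hb hD1 => ?_⟩
  set D := diam (γ '' Icc a b)
  have hγab : ContinuousOn γ (Icc a b) := hcont.mono (Icc_subset_Icc ha hb)
  have hbdd : IsBounded (γ '' Icc a b) := (isCompact_Icc.image_of_continuousOn hγab).isBounded
  have hD : 0 < D :=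
    (diam_pos ((Ico_infinite hab).nontrivial.image_of_injOn (hinj.mono (Ico_subset_Ico ha hb)))
      (hbdd.subset (image_mono Ico_subset_Icc_self))).trans_le
      (diam_mono (image_mono Ico_subset_Icc_self) hbdd)
  have hvar : eVariationOn γ (Icc a b) ≤ ENNReal.ofReal (2 * C * D) :=
    eVariationOn_le_two_mul_diam_of_chordArc hcont hC.le
      (fun a b ha hab hb => (hCA a b ha hab hb).1) ha hab.le hb
  obtain ⟨N, t, ⟨ht0, htN, hmono, hdiam⟩, hsum⟩ :=
    exists_isDiamPartition (δ := D / 2 * D) (ε := D * D) hγab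
      (ne_top_of_le_ne_top ENNReal.ofReal_ne_top hvar) (by positivity) (by linarith) (by nlinarith)
  have hN : 0 < N := Nat.pos_of_ne_zero fun h => hab.ne (ht0.symm.trans (h ▸ htN))
  refine ⟨N, t, hN, ht0, htN, hmono, hdiam, ?_⟩
  rw [div_le_iff₀ hD]
  exact (ENNReal.ofReal_le_ofReal_iff (by positivity)).1 (hsum.trans hvar)

/-- A chord-arc curve (rectifiable Jordan curve with `ℓ(γ(x,y)) ≤ C·|x−y|`,
where `γ(x,y)` is the subarc of smaller diameter) has the weak chord-arc property:
there is `M₀ > 0` such that every subarc `Γ'` of diameter `< 1` admits a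
`diam Γ'`-partition `P` with `M(Γ',P) ≤ M₀`. The curve is parametrized by `γ` on `[0,1]`
with `γ 0 = γ 1`; length is total variation `eVariationOn`. -/
theorem chord_arc_implies_weak_chord_arc
    (γ : ℝ → EuclideanSpace ℝ (Fin 2))
    (hcont : ContinuousOn γ (Set.Icc 0 1))
    (hinj : Set.InjOn γ (Set.Ico 0 1))
    (hclosed : γ 0 = γ 1)
    (hrect : eVariationOn γ (Set.Icc 0 1) ≠ ⊤)
    (C : ℝ) (hC : 0 < C)
    (hCA : ∀ a b : ℝ, 0 ≤ a → a ≤ b → b ≤ 1 →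
      (diam (γ '' Set.Icc a b) ≤ diam (γ '' (Set.Icc 0 a ∪ Set.Icc b 1)) →
        eVariationOn γ (Set.Icc a b) ≤ ENNReal.ofReal (C * dist (γ a) (γ b))) ∧
      (diam (γ '' (Set.Icc 0 a ∪ Set.Icc b 1)) ≤ diam (γ '' Set.Icc a b) →
        eVariationOn γ (Set.Icc 0 a) + eVariationOn γ (Set.Icc b 1) ≤
          ENNReal.ofReal (C * dist (γ a) (γ b)))) :
    ∃ M₀ : ℝ, 0 < M₀ ∧
      ∀ a b : ℝ, 0 ≤ a → a < b → b ≤ 1 → diam (γ '' Set.Icc a b) < 1 →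
        ∃ (N : ℕ) (t : ℕ → ℝ), 0 < N ∧ t 0 = a ∧ t N = b ∧
          (∀ i < N, t i < t (i + 1)) ∧
          (∀ i < N,
            diam (γ '' Set.Icc a b) / 2 * diam (γ '' Set.Icc a b) ≤
              diam (γ '' Set.Icc (t i) (t (i + 1))) ∧
            diam (γ '' Set.Icc (t i) (t (i + 1))) ≤
              diam (γ '' Set.Icc a b) * diam (γ '' Set.Icc a b)) ∧
          (∑ i ∈ Finset.range N, diam (γ '' Set.Icc (t i) (t (i + 1)))) /
              diam (γ '' Set.Icc a b) ≤ M₀ :=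
  chord_arc_implies_weak_chord_arc_general γ hcont hinj C hC hCA
end
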